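/- Let x, y ≥ 0 and c > 0, and let u⁰ be any real. If ln(x + y + c) ≥ z + u and y + c ≤ exp(u⁰)·(u - u⁰ + 1) hold for some reals z, u, then ln(1 + x/(y + c)) ≥ z. That is, the convexified constraints of Proposition 3 are an inner (conservative) approximation of the original rate constraint. -/

import Mathlib

open Real

theorem exp_mul_sub_add_one_le_exp (a b : ℝ) : exp a * (b - a + 1) ≤ exp b :=
  calc exp a * (b - a + 1) ≤ exp a * exp (b - a) := by
        gcongr
        linarith [add_one_le_exp (b - a)]
    _ = exp b := by rw [← exp_add, add_sub_cancel]

theorem log_le_of_le_exp_mul_sub_add_one {w a b : ℝ} (hw : 0 < w)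
    (h : w ≤ exp a * (b - a + 1)) : log w ≤ b :=
  (log_le_iff_le_exp hw).2 (h.trans (exp_mul_sub_add_one_le_exp a b))

theorem log_one_add_div_eq {x w : ℝ} (hx : 0 ≤ x) (hw : 0 < w) :
    log (1 + x / w) = log (x + w) - log w := by
  rw [one_add_div hw.ne', add_comm w x, log_div (by positivity) hw.ne']

theorem stmt_5 (x y c u₀ z u : ℝ) (hx : 0 ≤ x) (hy : 0 ≤ y) (hc : 0 < c)
    (h1 : Real.log (x + y + c) ≥ z + u)
    (h2 : y + c ≤ Real.exp u₀ * (u - u₀ + 1)) :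
    Real.log (1 + x / (y + c)) ≥ z := by
  have hyc : 0 < y + c := by positivity
  have hlog : log (y + c) ≤ u := log_le_of_le_exp_mul_sub_add_one hyc h2
  rw [log_one_add_div_eq hx hyc, ← add_assoc]
  linarith
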